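/- Upper bound on the size of the exponential: for an opponent game G with at least one player-originating edge (e_p[G] > 0), the number of leaves of !G is at most e_o[G]! · e_p[G]^{e_o[G]}, where e_o and e_p count the edges leaving opponent and player nodes respectively; consequently the edge count of !G is at most 2·e_o[G]·e_o[G]!·e_p[G]^{e_o[G]}. -/

import Mathlib

/-- Rose trees: the unlabeled shape of a game tree. -/
inductive RTree : Type where
  | node : List RTree → RTree

mutual
/-- An opponent game: a finite list of player games (its children). -/
inductive OGame : Type where
  | mk : List PGame → OGame
/-- A player game: a finite list of opponent games (its children). -/
inductive PGame : Type where
  | mk : List OGame → PGame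
end

mutual
/-- The dual of an opponent game. -/
def OGame.dual : OGame → PGame
  | .mk ps => .mk (ps.attach.map fun ⟨p, _⟩ => p.dual)
/-- The dual of a player game. -/
def PGame.dual : PGame → OGame
  | .mk os => .mk (os.attach.map fun ⟨o, _⟩ => o.dual)
end

mutual
/-- Strategy existence in an opponent game: a conjunction over children. -/
def OGame.strat : OGame → Bool
  | .mk ps => ps.attach.all fun ⟨p, _⟩ => p.strat
/-- Strategy existence in a player game: a disjunction over children. -/
def PGame.strat : PGame → Bool
  | .mk os => os.attach.any fun ⟨o, _⟩ => o.strat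
end

mutual
/-- Tensor of opponent games: `O ⊗ O' = (P_i ⊗ˡ O', O ⊗ʳ P'_k | …)`. -/
def otimes : OGame → OGame → OGame
  | .mk ps, .mk qs => .mk ((ps.attach.map fun ⟨p, _⟩ => oxl p (.mk qs)) ++
      (qs.attach.map fun ⟨q, _⟩ => oxr (.mk ps) q))
  termination_by o o' => sizeOf o + sizeOf o'
  decreasing_by
  · have := List.sizeOf_lt_of_mem ‹p ∈ ps›; simp_all; omega
  · have := List.sizeOf_lt_of_mem ‹q ∈ qs›; simp_all; omega
/-- Mixed tensor `O ⊗ʳ P = {O ⊗ O_j | j ∈ J}`. -/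
def oxr : OGame → PGame → PGame
  | o, .mk os => .mk (os.attach.map fun ⟨oj, _⟩ => otimes o oj)
  termination_by o p => sizeOf o + sizeOf p
  decreasing_by
  · have := List.sizeOf_lt_of_mem ‹oj ∈ os›; simp_all; omega
/-- Mixed tensor `P ⊗ˡ O = {O_j ⊗ O | j ∈ J}`. -/
def oxl : PGame → OGame → PGame
  | .mk os, o => .mk (os.attach.map fun ⟨oj, _⟩ => otimes oj o)
  termination_by p o => sizeOf p + sizeOf o
  decreasing_by
  · have := List.sizeOf_lt_of_mem ‹oj ∈ os›; simp_all; omega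
end

mutual
/-- Par of player games: `P ⅋ P' = {O_j ⅋ˡ P', P ⅋ʳ O'_k | …}`. -/
def parr : PGame → PGame → PGame
  | .mk os, .mk qs => .mk ((os.attach.map fun ⟨o, _⟩ => parrOP o (.mk qs)) ++
      (qs.attach.map fun ⟨q, _⟩ => parrPO (.mk os) q))
  termination_by p p' => sizeOf p + sizeOf p'
  decreasing_by
  · have := List.sizeOf_lt_of_mem ‹o ∈ os›; simp_all; omega
  · have := List.sizeOf_lt_of_mem ‹q ∈ qs›; simp_all; omega
/-- Mixed par `P ⅋ʳ O = (P ⅋ P_i | i ∈ I)`. -/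
def parrPO : PGame → OGame → OGame
  | p, .mk ps => .mk (ps.attach.map fun ⟨pi, _⟩ => parr p pi)
  termination_by p o => sizeOf p + sizeOf o
  decreasing_by
  · have := List.sizeOf_lt_of_mem ‹pi ∈ ps›; simp_all; omega
/-- Mixed par `O ⅋ˡ P = (P_i ⅋ P | i ∈ I)`. -/
def parrOP : OGame → PGame → OGame
  | .mk ps, p => .mk (ps.attach.map fun ⟨pi, _⟩ => parr pi p)
  termination_by o p => sizeOf o + sizeOf p
  decreasing_by
  · have := List.sizeOf_lt_of_mem ‹pi ∈ ps›; simp_all; omega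
end

mutual
/-- The exponential `!O`: `!() = ()` and `!O = ⊗_{i∈I} (b_i : !'P_i)` for `I ≠ ∅`. -/
def bang : OGame → OGame
  | .mk [] => .mk []
  | .mk (p :: ps) =>
      (ps.attach.map fun ⟨q, _⟩ => OGame.mk [bang' q]).foldl otimes (OGame.mk [bang' p])
/-- The auxiliary exponential `!'{a_j : O_j} = {a_j : !O_j}`. -/
def bang' : PGame → PGame
  | .mk os => .mk (os.attach.map fun ⟨o, _⟩ => bang o)
end

mutual
/-- Underlying unlabeled tree of an opponent game. -/
def OGame.toTree : OGame → RTree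
  | .mk ps => .node (ps.attach.map fun ⟨p, _⟩ => p.toTree)
/-- Underlying unlabeled tree of a player game. -/
def PGame.toTree : PGame → RTree
  | .mk os => .node (os.attach.map fun ⟨o, _⟩ => o.toTree)
end

/-- Number of nodes (including the root). -/
def RTree.nodes : RTree → ℕ
  | .node cs => 1 + (cs.attach.map fun ⟨c, _⟩ => c.nodes).sum

/-- Number of parent-child edges. -/
def RTree.edges : RTree → ℕ
  | .node cs => cs.length + (cs.attach.map fun ⟨c, _⟩ => c.edges).sum

/-- Number of leaves. -/
def RTree.leaves : RTree → ℕ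
  | .node [] => 1
  | .node cs => (cs.attach.map fun ⟨c, _⟩ => c.leaves).sum

/-- Uniform size: `u[leaf] = 0`, `u[node with n children] = (n-1) + Σ u[child]`. -/
def RTree.usize : RTree → ℕ
  | .node [] => 0
  | .node cs => (cs.length - 1) + (cs.attach.map fun ⟨c, _⟩ => c.usize).sum

/-- Depth: leaves have depth 0. -/
def RTree.depth : RTree → ℕ
  | .node cs => (cs.attach.map fun ⟨c, _⟩ => c.depth + 1).foldr max 0

/-- `profile t k` is the number of nodes of `t` at depth `k`. -/
def RTree.profile : RTree → ℕ → ℕ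
  | _, 0 => 1
  | .node cs, k + 1 => (cs.attach.map fun ⟨c, _⟩ => c.profile k).sum

mutual
/-- Number of player nodes of an opponent game. -/
def OGame.pnodes : OGame → ℕ
  | .mk ps => (ps.attach.map fun ⟨p, _⟩ => p.pnodes).sum
/-- Number of player nodes of a player game (the root counts). -/
def PGame.pnodes : PGame → ℕ
  | .mk os => 1 + (os.attach.map fun ⟨o, _⟩ => o.pnodes).sum
end

mutual
/-- Number of edges leaving opponent nodes, for an opponent game. -/
def OGame.eo : OGame → ℕ
  | .mk ps => ps.length + (ps.attach.map fun ⟨p, _⟩ => p.eo).sum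
/-- Number of edges leaving opponent nodes, for a player game. -/
def PGame.eo : PGame → ℕ
  | .mk os => (os.attach.map fun ⟨o, _⟩ => o.eo).sum
end

mutual
/-- Number of edges leaving player nodes, for an opponent game. -/
def OGame.ep : OGame → ℕ
  | .mk ps => (ps.attach.map fun ⟨p, _⟩ => p.ep).sum
/-- Number of edges leaving player nodes, for a player game. -/
def PGame.ep : PGame → ℕ
  | .mk os => os.length + (os.attach.map fun ⟨o, _⟩ => o.ep).sum
end

/-- `γ(i,j) = 1` if `i` or `j` is zero or even, else `0`. -/
def gammaCoef (i j : ℕ) : ℕ :=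
  if i = 0 ∨ j = 0 ∨ i % 2 = 0 ∨ j % 2 = 0 then 1 else 0

mutual
/-- The single-branch player chain `L_n`. -/
def Lp : ℕ → PGame
  | 0 => .mk []
  | n + 1 => .mk [Lo n]
/-- The single-branch opponent chain `L'_n`. -/
def Lo : ℕ → OGame
  | 0 => .mk []
  | n + 1 => .mk [Lp n]
end

/-! Write `oDepth` for the largest number of opponent moves along a play. A play of
`O ⊗ O'` interleaves a play of `O` with one of `O'`; splitting on the component of the first
opponent move gives, via Pascal's rule, at most `C(a + b, a) · leaves O · leaves O'` leaves
when `oDepth O ≤ a` and `oDepth O' ≤ b`. Folding this over the factors `(b_i : !'P_i)` of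
`!O`, of opponent depth at most `e_o[P_i] + 1`, the binomials multiply to the multinomial
`e_o[O]! / ∏ (e_o[P_i] + 1)!`, because `∑ (e_o[P_i] + 1) = e_o[O]`. By induction `!'P_i` has
at most `e_o[P_i]! · e_p[O]^(e_o[P_i] + 1)` leaves, its root having `e_p[P_i] ≤ e_p[O]`
children, and `e_o[P_i]! ≤ (e_o[P_i] + 1)!` lets the factorials cancel. For the edges: plays
alternate starting with an opponent move, so `!O` has depth at most
`2 · oDepth (!O) ≤ 2 · e_o[O]`, and a tree has at most `depth · leaves` edges. -/

theorem List.foldr_max_zero_le_iff {l : List ℕ} {n : ℕ} :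
    l.foldr max 0 ≤ n ↔ ∀ a ∈ l, a ≤ n := by
  induction l with
  | nil => simp
  | cons b l ih => simp [ih]

theorem List.prod_map_pow_eq_pow_sum {ι M : Type*} [Monoid M] (l : List ι) (f : ι → ℕ)
    (a : M) : (l.map fun i => a ^ f i).prod = a ^ (l.map f).sum := by
  induction l <;> simp [pow_add, *]

theorem Nat.add_choose_mul_pos {a b L : ℕ} (hL : 0 < L) : 0 < (a + b).choose a * L :=
  Nat.mul_pos (Nat.choose_pos (Nat.le_add_right a b)) hL

namespace RTree

@[simp] theorem leaves_nil : (node []).leaves = 1 := by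
  rw [leaves]

theorem leaves_of_ne_nil {cs : List RTree} (h : cs ≠ []) :
    (node cs).leaves = (cs.map leaves).sum := by
  cases cs with
  | nil => exact absurd rfl h
  | cons c cs => simp [leaves]

theorem edges_node (cs : List RTree) : (node cs).edges = cs.length + (cs.map edges).sum := by
  rw [edges]; simp

theorem depth_node_le_iff {cs : List RTree} {n : ℕ} :
    (node cs).depth ≤ n ↔ ∀ c ∈ cs, c.depth + 1 ≤ n := by
  rw [depth]; simp [List.foldr_max_zero_le_iff]

theorem leaves_pos : ∀ t : RTree, 0 < t.leaves
  | node [] => by simp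
  | node (c :: cs) => by
      rw [leaves_of_ne_nil (List.cons_ne_nil c cs), List.map_cons, List.sum_cons]
      have := leaves_pos c
      omega

theorem leaves_node_append {cs ds : List RTree} (hc : cs ≠ []) (hd : ds ≠ []) :
    (node (cs ++ ds)).leaves = (node cs).leaves + (node ds).leaves := by
  rw [leaves_of_ne_nil (by simp [hc]), leaves_of_ne_nil hc, leaves_of_ne_nil hd,
    List.map_append, List.sum_append]

theorem leaves_node_le_mul {cs : List RTree} {c : ℕ} (hc : 0 < c)
    (h : ∀ t ∈ cs, t.leaves ≤ c) : (node cs).leaves ≤ max 1 cs.length * c := by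
  rcases eq_or_ne cs [] with rfl | hne
  · simpa using Nat.one_le_of_lt hc
  · rw [leaves_of_ne_nil hne]
    calc (cs.map leaves).sum ≤ cs.length * c := by
          simpa using List.sum_le_card_nsmul (cs.map leaves) c (by simpa using h)
      _ ≤ max 1 cs.length * c := Nat.mul_le_mul_right _ (le_max_right _ _)

theorem leaves_node_map_le_mul {α : Type*} {l : List α} {g h : α → RTree} {k : ℕ}
    (hk : 0 < k) (H : ∀ x ∈ l, (g x).leaves ≤ k * (h x).leaves) :
    (node (l.map g)).leaves ≤ k * (node (l.map h)).leaves := by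
  rcases eq_or_ne l [] with rfl | hne
  · simpa using Nat.one_le_of_lt hk
  · rw [leaves_of_ne_nil (by simpa using hne), leaves_of_ne_nil (by simpa using hne),
      List.map_map, List.map_map, ← List.sum_map_mul_left]
    exact List.sum_le_sum H

theorem edges_le_depth_mul_leaves : ∀ t : RTree, t.edges ≤ t.depth * t.leaves
  | node [] => by simp [edges_node]
  | node (c :: cs) => by
      set D := (node (c :: cs)).depth
      have hchild := depth_node_le_iff.mp (le_refl D)
      have step : ∀ t ∈ c :: cs, t.edges + 1 ≤ D * t.leaves := fun t ht =>
        calc t.edges + 1 ≤ t.depth * t.leaves + t.leaves :=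
              Nat.add_le_add (edges_le_depth_mul_leaves t) (leaves_pos t)
          _ = (t.depth + 1) * t.leaves := by ring
          _ ≤ D * t.leaves := Nat.mul_le_mul_right _ (hchild t ht)
      calc (node (c :: cs)).edges = ((c :: cs).map fun t => t.edges + 1).sum := by
            simp only [edges_node, List.sum_map_add, List.map_const', List.sum_replicate,
              smul_eq_mul, mul_one]
            ring
        _ ≤ ((c :: cs).map fun t => D * t.leaves).sum := List.sum_le_sum step
        _ = D * (node (c :: cs)).leaves := by
            rw [leaves_of_ne_nil (List.cons_ne_nil c cs), List.sum_map_mul_left]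

end RTree

@[simp] theorem OGame.toTree_mk (ps : List PGame) :
    (OGame.mk ps).toTree = .node (ps.map PGame.toTree) := by
  rw [OGame.toTree]; simp

@[simp] theorem PGame.toTree_mk (os : List OGame) :
    (PGame.mk os).toTree = .node (os.map OGame.toTree) := by
  rw [PGame.toTree]; simp

theorem OGame.eo_mk (ps : List PGame) : (OGame.mk ps).eo = (ps.map fun p => p.eo + 1).sum := by
  rw [OGame.eo]; simp [List.sum_map_add, add_comm]

theorem PGame.eo_mk (os : List OGame) : (PGame.mk os).eo = (os.map OGame.eo).sum := by
  rw [PGame.eo]; simp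

theorem OGame.ep_mk (ps : List PGame) : (OGame.mk ps).ep = (ps.map PGame.ep).sum := by
  rw [OGame.ep]; simp

theorem PGame.ep_mk (os : List OGame) : (PGame.mk os).ep = os.length + (os.map OGame.ep).sum := by
  rw [PGame.ep]; simp

theorem otimes_mk (ps qs : List PGame) :
    otimes (.mk ps) (.mk qs) =
      .mk ((ps.map fun p => oxl p (.mk qs)) ++ (qs.map fun q => oxr (.mk ps) q)) := by
  rw [otimes]; simp

theorem oxr_mk (o : OGame) (os : List OGame) : oxr o (.mk os) = .mk (os.map (otimes o)) := by
  rw [oxr]; simp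

theorem oxl_mk (os : List OGame) (o : OGame) :
    oxl (.mk os) o = .mk (os.map fun oj => otimes oj o) := by
  rw [oxl]; simp

theorem bang_nil : bang (.mk []) = .mk [] := by
  rw [bang]

theorem bang_cons (p : PGame) (ps : List PGame) :
    bang (.mk (p :: ps)) = (ps.map fun q => OGame.mk [bang' q]).foldl otimes (.mk [bang' p]) := by
  rw [bang]; simp

theorem bang'_mk (os : List OGame) : bang' (.mk os) = .mk (os.map bang) := by
  rw [bang']; simp

mutual
def OGame.oDepth : OGame → ℕ
  | .mk ps => (ps.attach.map fun ⟨p, _⟩ => p.oDepth + 1).foldr max 0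
def PGame.oDepth : PGame → ℕ
  | .mk os => (os.attach.map fun ⟨o, _⟩ => o.oDepth).foldr max 0
end

theorem OGame.oDepth_mk_le_iff {ps : List PGame} {n : ℕ} :
    (OGame.mk ps).oDepth ≤ n ↔ ∀ p ∈ ps, p.oDepth + 1 ≤ n := by
  rw [OGame.oDepth]; simp [List.foldr_max_zero_le_iff]

theorem PGame.oDepth_mk_le_iff {os : List OGame} {n : ℕ} :
    (PGame.mk os).oDepth ≤ n ↔ ∀ o ∈ os, o.oDepth ≤ n := by
  rw [PGame.oDepth]; simp [List.foldr_max_zero_le_iff]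

theorem OGame.oDepth_mk_single (p : PGame) : (OGame.mk [p]).oDepth = p.oDepth + 1 := by
  rw [OGame.oDepth]; simp

theorem OGame.leaves_mk_single (p : PGame) : (OGame.mk [p]).toTree.leaves = p.toTree.leaves := by
  simp [RTree.leaves_of_ne_nil]

mutual
theorem OGame.depth_toTree_le : ∀ o : OGame, o.toTree.depth ≤ 2 * o.oDepth
  | .mk ps => by
      simp only [OGame.toTree_mk, RTree.depth_node_le_iff, List.forall_mem_map]
      intro p hp
      have := p.depth_toTree_le
      have := OGame.oDepth_mk_le_iff.mp le_rfl p hp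
      omega

theorem PGame.depth_toTree_le : ∀ p : PGame, p.toTree.depth ≤ 2 * p.oDepth + 1
  | .mk os => by
      simp only [PGame.toTree_mk, RTree.depth_node_le_iff, List.forall_mem_map]
      intro o ho
      have := o.depth_toTree_le
      have := PGame.oDepth_mk_le_iff.mp le_rfl o ho
      omega
end

mutual
theorem otimes_oDepth_le : ∀ o o' : OGame, (otimes o o').oDepth ≤ o.oDepth + o'.oDepth
  | .mk ps, .mk qs => by
      simp only [otimes_mk, OGame.oDepth_mk_le_iff, List.mem_append, List.mem_map]
      rintro _ (⟨p, hp, rfl⟩ | ⟨q, hq, rfl⟩)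
      · have := oxl_oDepth_le p (.mk qs)
        have := OGame.oDepth_mk_le_iff.mp le_rfl p hp
        omega
      · have := oxr_oDepth_le (.mk ps) q
        have := OGame.oDepth_mk_le_iff.mp le_rfl q hq
        omega

theorem oxr_oDepth_le : ∀ (o : OGame) (p : PGame), (oxr o p).oDepth ≤ o.oDepth + p.oDepth
  | o, .mk os => by
      simp only [oxr_mk, PGame.oDepth_mk_le_iff, List.forall_mem_map]
      intro oj hoj
      have := otimes_oDepth_le o oj
      have := PGame.oDepth_mk_le_iff.mp le_rfl oj hoj
      omega

theorem oxl_oDepth_le : ∀ (p : PGame) (o : OGame), (oxl p o).oDepth ≤ p.oDepth + o.oDepth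
  | .mk os, o => by
      simp only [oxl_mk, PGame.oDepth_mk_le_iff, List.forall_mem_map]
      intro oj hoj
      have := otimes_oDepth_le oj o
      have := PGame.oDepth_mk_le_iff.mp le_rfl oj hoj
      omega
end

theorem foldl_otimes_oDepth_le : ∀ (l : List OGame) (X : OGame),
    (l.foldl otimes X).oDepth ≤ X.oDepth + (l.map OGame.oDepth).sum
  | [], X => by simp
  | o :: l, X => by
      have := foldl_otimes_oDepth_le l (otimes X o)
      have := otimes_oDepth_le X o
      simp only [List.foldl_cons, List.map_cons, List.sum_cons]
      omega

mutual
theorem otimes_leaves_le :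
    ∀ (o o' : OGame) (a b : ℕ), o.oDepth ≤ a → o'.oDepth ≤ b →
    (otimes o o').toTree.leaves ≤ (a + b).choose a * o.toTree.leaves * o'.toTree.leaves
  | .mk [], .mk qs, a, b, _, hb => by
      simp only [otimes_mk, List.map_nil, List.nil_append, OGame.toTree_mk, List.map_map,
        RTree.leaves_nil, mul_one]
      refine RTree.leaves_node_map_le_mul (Nat.choose_pos (Nat.le_add_right a b)) fun q hq => ?_
      simpa using oxr_leaves_le (.mk []) q a b (by simp [OGame.oDepth_mk_le_iff])
        (by have := OGame.oDepth_mk_le_iff.mp hb q hq; omega)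
  | .mk ps, .mk [], a, b, ha, _ => by
      simp only [otimes_mk, List.map_nil, List.append_nil, OGame.toTree_mk, List.map_map,
        RTree.leaves_nil, mul_one]
      refine RTree.leaves_node_map_le_mul (Nat.choose_pos (Nat.le_add_right a b)) fun p hp => ?_
      simpa using oxl_leaves_le p (.mk []) a b
        (by have := OGame.oDepth_mk_le_iff.mp ha p hp; omega) (by simp [OGame.oDepth_mk_le_iff])
  | .mk (p₀ :: ps), .mk (q₀ :: qs), a, b, ha, hb => by
      have hp := OGame.oDepth_mk_le_iff.mp ha
      have hq := OGame.oDepth_mk_le_iff.mp hb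
      obtain ⟨a, rfl⟩ : ∃ a', a = a' + 1 := ⟨a - 1, by have := hp p₀ (by simp); omega⟩
      obtain ⟨b, rfl⟩ : ∃ b', b = b' + 1 := ⟨b - 1, by have := hq q₀ (by simp); omega⟩
      have hl := RTree.leaves_node_map_le_mul (g := fun p => (oxl p (.mk (q₀ :: qs))).toTree)
        (h := PGame.toTree) (Nat.add_choose_mul_pos (RTree.leaves_pos _)) fun p hp' =>
          (oxl_leaves_le p _ a (b + 1) (by have := hp p hp'; omega) hb).trans_eq
            (mul_right_comm _ _ _)
      have hr := RTree.leaves_node_map_le_mul (g := fun q => (oxr (.mk (p₀ :: ps)) q).toTree)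
        (h := PGame.toTree) (Nat.add_choose_mul_pos (RTree.leaves_pos _)) fun q hq' =>
          oxr_leaves_le _ q (a + 1) b ha (by have := hq q hq'; omega)
      have pascal : (a + (b + 1)).choose a + (a + 1 + b).choose (a + 1) =
          (a + 1 + (b + 1)).choose (a + 1) := by
        rw [show a + 1 + (b + 1) = a + (b + 1) + 1 by ring, Nat.choose_succ_succ,
          show a + 1 + b = a + (b + 1) by ring]
      rw [otimes_mk, OGame.toTree_mk, List.map_append, List.map_map, List.map_map,
        RTree.leaves_node_append (by simp) (by simp)]
      simp only [OGame.toTree_mk] at hl hr ⊢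
      calc _ ≤ _ := Nat.add_le_add hl hr
        _ = _ := by rw [← pascal]; ring

theorem oxr_leaves_le :
    ∀ (o : OGame) (p : PGame) (a b : ℕ), o.oDepth ≤ a → p.oDepth ≤ b →
    (oxr o p).toTree.leaves ≤ (a + b).choose a * o.toTree.leaves * p.toTree.leaves
  | o, .mk os, a, b, ha, hb => by
      rw [oxr_mk, PGame.toTree_mk, PGame.toTree_mk, List.map_map]
      exact RTree.leaves_node_map_le_mul (Nat.add_choose_mul_pos (RTree.leaves_pos _))
        fun oj hoj => otimes_leaves_le o oj a b ha (PGame.oDepth_mk_le_iff.mp hb oj hoj)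

theorem oxl_leaves_le :
    ∀ (p : PGame) (o : OGame) (a b : ℕ), p.oDepth ≤ a → o.oDepth ≤ b →
    (oxl p o).toTree.leaves ≤ (a + b).choose a * p.toTree.leaves * o.toTree.leaves
  | .mk os, o, a, b, ha, hb => by
      rw [oxl_mk, PGame.toTree_mk, PGame.toTree_mk, List.map_map, mul_right_comm]
      exact RTree.leaves_node_map_le_mul (Nat.add_choose_mul_pos (RTree.leaves_pos _))
        fun oj hoj =>
          (otimes_leaves_le oj o a b (PGame.oDepth_mk_le_iff.mp ha oj hoj) hb).trans_eq
            (mul_right_comm _ _ _)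
end

open Nat in
theorem foldl_otimes_leaves_le {α : Type*} (G : α → OGame) (f : α → ℕ) :
    ∀ l : List α, (∀ i ∈ l, (G i).oDepth ≤ f i) →
      ∀ (X : OGame) (x : ℕ), X.oDepth ≤ x →
      ((l.map G).foldl otimes X).toTree.leaves * x ! * (l.map fun i => (f i)!).prod ≤
        (x + (l.map f).sum)! * X.toTree.leaves * (l.map fun i => (G i).toTree.leaves).prod
  | [], _, X, x, _ => by simp [mul_comm]
  | i :: l, hl, X, x, hX => by
      have ih := foldl_otimes_leaves_le G f l (fun j hj => hl j (by simp [hj])) (otimes X (G i))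
        (x + f i) ((otimes_oDepth_le X (G i)).trans (Nat.add_le_add hX (hl i (by simp))))
      have htensor := otimes_leaves_le X (G i) x (f i) hX (hl i (by simp))
      have hfact : (x + f i).choose x * x ! * (f i)! = (x + f i)! := by
        rw [Nat.choose_symm_add, Nat.add_choose_mul_factorial_mul_factorial]
      refine Nat.le_of_mul_le_mul_right ?_ (Nat.factorial_pos (x + f i))
      simp only [List.map_cons, List.foldl_cons, List.sum_cons, List.prod_cons]
      calc _ = ((l.map G).foldl otimes (otimes X (G i))).toTree.leaves * (x + f i)! *
              (l.map fun i => (f i)!).prod * (x ! * (f i)!) := by ring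
        _ ≤ (x + f i + (l.map f).sum)! * (otimes X (G i)).toTree.leaves *
              (l.map fun i => (G i).toTree.leaves).prod * (x ! * (f i)!) := by gcongr
        _ ≤ (x + f i + (l.map f).sum)! *
              ((x + f i).choose x * X.toTree.leaves * (G i).toTree.leaves) *
              (l.map fun i => (G i).toTree.leaves).prod * (x ! * (f i)!) := by gcongr
        _ = _ := by rw [← hfact, add_assoc]; ring

mutual
theorem bang_oDepth_le : ∀ o : OGame, (bang o).oDepth ≤ o.eo
  | .mk [] => by simp [bang_nil, OGame.oDepth_mk_le_iff]
  | .mk (p :: ps) => by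
      have hp := bang'_oDepth_le p
      have hps : ((ps.map fun q => OGame.mk [bang' q]).map OGame.oDepth).sum ≤
          (ps.map fun q => q.eo + 1).sum := by
        rw [List.map_map]
        exact List.sum_le_sum fun q _ => by simpa [OGame.oDepth_mk_single] using bang'_oDepth_le q
      rw [bang_cons, OGame.eo_mk, List.map_cons, List.sum_cons]
      have := foldl_otimes_oDepth_le (ps.map fun q => OGame.mk [bang' q]) (.mk [bang' p])
      rw [OGame.oDepth_mk_single] at this
      omega

theorem bang'_oDepth_le : ∀ p : PGame, (bang' p).oDepth ≤ p.eo
  | .mk os => by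
      simp only [bang'_mk, PGame.oDepth_mk_le_iff, List.forall_mem_map, PGame.eo_mk]
      exact fun o ho => (bang_oDepth_le o).trans (List.le_sum_of_mem (List.mem_map_of_mem ho))
end

open Nat in
mutual
theorem bang_leaves_le : ∀ (o : OGame) (M : ℕ), 0 < M → o.ep ≤ M →
    (bang o).toTree.leaves ≤ o.eo ! * M ^ o.eo
  | .mk [], _, _, _ => by simp [bang_nil, OGame.eo_mk]
  | .mk (p :: ps), M, hM, hep => by
      have hep' : ∀ q ∈ p :: ps, q.ep ≤ M := fun q hq =>
        (List.le_sum_of_mem (List.mem_map_of_mem hq)).trans (OGame.ep_mk _ ▸ hep)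
      set P := ((p :: ps).map fun q => (q.eo + 1)!).prod
      have hfold := foldl_otimes_leaves_le (fun q => OGame.mk [bang' q]) (fun q => q.eo + 1) ps
        (fun q _ => by simpa [OGame.oDepth_mk_single] using bang'_oDepth_le q) (.mk [bang' p])
        (p.eo + 1) (by simpa [OGame.oDepth_mk_single] using bang'_oDepth_le p)
      have hfactors : ((p :: ps).map fun q => (bang' q).toTree.leaves).prod ≤
          P * M ^ (OGame.mk (p :: ps)).eo :=
        calc _ ≤ ((p :: ps).map fun q => q.eo ! * M ^ (q.eo + 1)).prod :=
              List.prod_le_prod' fun q hq => bang'_leaves_le q M hM (hep' q hq)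
          _ ≤ ((p :: ps).map fun q => (q.eo + 1)! * M ^ (q.eo + 1)).prod :=
              List.prod_le_prod' fun q _ =>
                Nat.mul_le_mul_right _ (Nat.factorial_le (Nat.le_succ _))
          _ = P * M ^ (OGame.mk (p :: ps)).eo := by
              rw [List.prod_map_mul, List.prod_map_pow_eq_pow_sum, OGame.eo_mk]
      refine Nat.le_of_mul_le_mul_right ?_ (by simp [P, Nat.factorial_pos] : 0 < P)
      calc _ = _ := by rw [bang_cons]; simp only [P, List.map_cons, List.prod_cons, mul_assoc]
        _ ≤ _ := hfold
        _ = (OGame.mk (p :: ps)).eo ! * ((p :: ps).map fun q => (bang' q).toTree.leaves).prod := by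
            simp only [OGame.leaves_mk_single, OGame.eo_mk, List.map_cons, List.sum_cons,
              List.prod_cons, mul_assoc]
        _ ≤ (OGame.mk (p :: ps)).eo ! * (P * M ^ (OGame.mk (p :: ps)).eo) := by gcongr
        _ = _ := by ring

theorem bang'_leaves_le : ∀ (p : PGame) (M : ℕ), 0 < M → p.ep ≤ M →
    (bang' p).toTree.leaves ≤ p.eo ! * M ^ (p.eo + 1)
  | .mk os, M, hM, hep => by
      rw [PGame.ep_mk] at hep
      have hchild : ∀ t ∈ os.map fun o => (bang o).toTree,
          t.leaves ≤ (PGame.mk os).eo ! * M ^ (PGame.mk os).eo := by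
        simp only [List.forall_mem_map]
        intro o ho
        have hle : o.eo ≤ (PGame.mk os).eo :=
          PGame.eo_mk os ▸ List.le_sum_of_mem (List.mem_map_of_mem ho)
        calc (bang o).toTree.leaves ≤ o.eo ! * M ^ o.eo :=
              bang_leaves_le o M hM ((List.le_sum_of_mem (List.mem_map_of_mem ho)).trans (by omega))
          _ ≤ _ := Nat.mul_le_mul (Nat.factorial_le hle) (Nat.pow_le_pow_right hM hle)
      rw [bang'_mk, PGame.toTree_mk, List.map_map]
      calc _ ≤ max 1 (os.map fun o => (bang o).toTree).length *
              ((PGame.mk os).eo ! * M ^ (PGame.mk os).eo) :=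
            RTree.leaves_node_le_mul (Nat.mul_pos (Nat.factorial_pos _) (Nat.pow_pos hM)) hchild
        _ ≤ M * ((PGame.mk os).eo ! * M ^ (PGame.mk os).eo) :=
            Nat.mul_le_mul_right _ (max_le hM (by simp; omega))
        _ = _ := by ring
end

theorem bang_depth_le (o : OGame) : (bang o).toTree.depth ≤ 2 * o.eo :=
  (OGame.depth_toTree_le _).trans (Nat.mul_le_mul_left 2 (bang_oDepth_le o))

/-- for e_p[G] > 0, leaves[!G] ≤ e_o[G]!·e_p[G]^{e_o[G]} and
e[!G] ≤ 2·e_o[G]·e_o[G]!·e_p[G]^{e_o[G]}. -/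
theorem bang_size_bound (O : OGame) (h : 0 < O.ep) :
    (bang O).toTree.leaves ≤ Nat.factorial O.eo * O.ep ^ O.eo ∧
    (bang O).toTree.edges ≤ 2 * O.eo * Nat.factorial O.eo * O.ep ^ O.eo := by
  have hleaves := bang_leaves_le O O.ep h le_rfl
  refine ⟨hleaves, ?_⟩
  calc (bang O).toTree.edges ≤ (bang O).toTree.depth * (bang O).toTree.leaves :=
        RTree.edges_le_depth_mul_leaves _
    _ ≤ 2 * O.eo * (O.eo.factorial * O.ep ^ O.eo) := Nat.mul_le_mul (bang_depth_le O) hleaves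
    _ = 2 * O.eo * O.eo.factorial * O.ep ^ O.eo := by ring
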